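/- Let M be the symmetric intersection matrix of the configuration: a chain of m−2 vertices of weight 2, followed by a weight-a₀ vertex at the center of a D-type tail, in the specific pattern b) of section 3.17: ⋯—∘(3)—∘(2)—⋯—∘(2)—∘(3)—∘(a₀=2)—∘(2)—∘(2) with ∘(2)—•(1) attached below the a₀-vertex, for any chain length k ≥ 1 between the two weight-3 vertices. Then M is not negative definite; hence this configuration of curves is not contractible to a point. -/

import Mathlib

/-!
The a₀-vertex together with its three arms — the right weight-3 curve, the two (−2)-curves
after it, and the (−2)-curve followed by the (−1)-curve — is a subconfiguration whose
intersection matrix has the kernel vector with multiplicities `1, 3, 2, 1, 3, 3`. Extending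
this vector by zero gives a nonzero vector on which the quadratic form of `M` vanishes.
-/

open Function Matrix

section QuadraticForm

variable {ι κ R : Type*} [Fintype ι] [Fintype κ]

lemma sum_sum_mul_mul_eq_dotProduct_mulVec [CommSemiring R] (w : ι → R) (M : Matrix ι ι R) :
    ∑ a, ∑ b, w a * M a b * w b = w ⬝ᵥ (M *ᵥ w) := by
  simp only [dotProduct, mulVec, Finset.mul_sum, mul_assoc]

lemma sum_sum_extend_mul_mul [Semiring R] {e : ι → κ} (he : Injective e) (w : ι → R)
    (M : κ → κ → R) :
    ∑ i, ∑ j, extend e w (0 : κ → R) i * M i j * extend e w (0 : κ → R) j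
      = ∑ a, ∑ b, w a * M (e a) (e b) * w b := by
  have hext : ∀ i ∉ Set.range e, extend e w (0 : κ → R) i = 0 := fun i hi =>
    extend_apply' w (0 : κ → R) i hi
  refine (Fintype.sum_of_injective e he _ _ (fun i hi => ?_) fun a => ?_).symm
  · simp [hext i hi]
  · refine Fintype.sum_of_injective e he _ _ (fun j hj => by simp [hext j hj]) fun b => ?_
    simp only [he.extend_apply]

lemma not_forall_sum_sum_mul_mul_neg_of_injective [Semiring R] [Preorder R] {e : ι → κ}
    (he : Injective e) {w : ι → R} (hw : w ≠ 0) {M : κ → κ → R}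
    (h : 0 ≤ ∑ a, ∑ b, w a * M (e a) (e b) * w b) :
    ¬ ∀ x : κ → R, x ≠ 0 → ∑ i, ∑ j, x i * M i j * x j < 0 := by
  intro hneg
  have hx : extend e w (0 : κ → R) ≠ 0 := fun h0 =>
    hw (funext fun a => by simpa [he.extend_apply] using congrFun h0 (e a))
  exact (hneg _ hx).not_ge (by rwa [sum_sum_extend_mul_mul he])

end QuadraticForm

section Tripod

/-- Order of the vertices: the weight-3 curve, the a₀-vertex, the two (−2)-curves of the
long arm, then the (−2)-curve and the (−1)-curve below a₀. -/
def tripodMatrix : Matrix (Fin 6) (Fin 6) ℚ :=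
  !![-3, 1, 0, 0, 0, 0;
     1, -2, 1, 0, 1, 0;
     0, 1, -2, 1, 0, 0;
     0, 0, 1, -2, 0, 0;
     0, 1, 0, 0, -2, 1;
     0, 0, 0, 0, 1, -1]

def tripodVec : Fin 6 → ℚ := ![1, 3, 2, 1, 3, 3]

lemma tripodVec_ne_zero : tripodVec ≠ 0 := fun h => by
  simpa [tripodVec] using congrFun h 0

lemma tripodMatrix_mulVec_tripodVec : tripodMatrix *ᵥ tripodVec = 0 := by
  ext a
  fin_cases a <;> simp [tripodMatrix, tripodVec, mulVec, dotProduct, Fin.sum_univ_succ] <;>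
    norm_num

def tripodEmbedding (k : ℕ) (a : Fin 6) : Fin (k + 7) := ⟨k + 1 + a, by omega⟩

lemma tripodEmbedding_injective (k : ℕ) : Injective (tripodEmbedding k) := fun a b h => by
  simpa [tripodEmbedding, Fin.ext_iff] using h

end Tripod

/-- Indices: `0` is the left weight-3 vertex, `1..k` the middle chain, `k+1` the right
weight-3 vertex, `k+2` the `a₀`-vertex, `k+3, k+4` the two weight-2 vertices after it,
`k+5` the weight-2 vertex below `a₀`, and `k+6` the `(-1)`-curve. -/
theorem stmt_16_general (k : ℕ)
    (M : Matrix (Fin (k + 7)) (Fin (k + 7)) ℚ)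
    (hM : ∀ i j : Fin (k + 7), M i j =
      if i = j then
        -(if i.val = 0 ∨ i.val = k + 1 then (3 : ℚ)
          else if i.val = k + 6 then 1 else 2)
      else if (i.val + 1 = j.val ∧ j.val ≤ k + 4) ∨ (j.val + 1 = i.val ∧ i.val ≤ k + 4)
          ∨ (i.val = k + 2 ∧ j.val = k + 5) ∨ (i.val = k + 5 ∧ j.val = k + 2)
          ∨ (i.val = k + 5 ∧ j.val = k + 6) ∨ (i.val = k + 6 ∧ j.val = k + 5)
        then 1 else 0) :
    ¬ ∀ x : Fin (k + 7) → ℚ, x ≠ 0 → ∑ i, ∑ j, x i * M i j * x j < 0 := by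
  have hsub : ∀ a b, M (tripodEmbedding k a) (tripodEmbedding k b) = tripodMatrix a b := by
    intro a b
    rw [hM]
    fin_cases a <;> fin_cases b <;> simp [tripodEmbedding, tripodMatrix, Fin.ext_iff] <;> omega
  refine not_forall_sum_sum_mul_mul_neg_of_injective (tripodEmbedding_injective k)
    tripodVec_ne_zero (Eq.ge ?_)
  simp only [hsub, sum_sum_mul_mul_eq_dotProduct_mulVec, tripodMatrix_mulVec_tripodVec,
    dotProduct_zero]

/-- Configuration b) of section 3.17: a chain
`∘(3)—∘(2)—⋯—∘(2)—∘(3)—∘(a₀=2)—∘(2)—∘(2)` with `k ≥ 1` weight-2 vertices between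
the two weight-3 vertices, and a tail `∘(2)—•(1)` attached below the `a₀`-vertex.
Its intersection matrix `M` (with `M j j = -aⱼ` and `M i j = 1` for adjacent
vertices) is not negative definite; hence the configuration is not contractible to
a point. Indices: `0` is the left weight-3 vertex, `1..k` the middle chain,
`k+1` the right weight-3 vertex, `k+2` the `a₀`-vertex, `k+3, k+4` the two
weight-2 vertices after it, `k+5` the weight-2 vertex below `a₀`, and `k+6` the
`(-1)`-curve. -/
theorem stmt_16 (k : ℕ) (hk : 1 ≤ k)
    (M : Matrix (Fin (k + 7)) (Fin (k + 7)) ℚ)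
    (hM : ∀ i j : Fin (k + 7), M i j =
      if i = j then
        -(if i.val = 0 ∨ i.val = k + 1 then (3 : ℚ)
          else if i.val = k + 6 then 1 else 2)
      else if (i.val + 1 = j.val ∧ j.val ≤ k + 4) ∨ (j.val + 1 = i.val ∧ i.val ≤ k + 4)
          ∨ (i.val = k + 2 ∧ j.val = k + 5) ∨ (i.val = k + 5 ∧ j.val = k + 2)
          ∨ (i.val = k + 5 ∧ j.val = k + 6) ∨ (i.val = k + 6 ∧ j.val = k + 5)
        then 1 else 0) :
    ¬ ∀ x : Fin (k + 7) → ℚ, x ≠ 0 → ∑ i, ∑ j, x i * M i j * x j < 0 :=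
  stmt_16_general k M hM
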